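/- For each x ≥ √(2/π) and every λ ≥ 0: (λ − λ*(x))²/40 ≤ μ*(x) − ( λx − λ²/2 − φ(λ) ) ≤ (λ − λ*(x))²/2, where λ*(x) is the unique λ ≥ 0 with λ + φ'(λ) = x. -/

import Mathlib

open MeasureTheory ProbabilityTheory

noncomputable def gaussMatrix (n : ℕ) : Measure (Fin n → Fin n → ℝ) :=
  Measure.pi fun _ => Measure.pi fun _ => gaussianReal 0 1

noncomputable def gaussVec (n : ℕ) : Measure (Fin n → ℝ) :=
  Measure.pi fun _ => gaussianReal 0 1

/-- The symmetric, zero-diagonal coupling matrix built from the i.i.d. upper-triangular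
standard Gaussians. -/
def Wmat {n : ℕ} (ω : Fin n → Fin n → ℝ) (i j : Fin n) : ℝ :=
  if i < j then ω i j else if j < i then ω j i else 0

/-- The Sherrington--Kirkpatrick Hamiltonian `H(σ) = ∑_{i<j} σ_i σ_j W_{ij}`. -/
noncomputable def Ham {n : ℕ} (σ : Fin n → ℝ) (ω : Fin n → Fin n → ℝ) : ℝ :=
  ∑ i : Fin n, ∑ j : Fin n, if i < j then σ i * σ j * Wmat ω i j else 0

/-- `σ` with its `i`-th spin flipped. -/
def flipSpin {n : ℕ} (σ : Fin n → ℝ) (i : Fin n) : Fin n → ℝ :=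
  Function.update σ i (-(σ i))

/-- `σ` is locally optimal if no single spin flip decreases the energy. -/
def IsLocalOpt {n : ℕ} (σ : Fin n → ℝ) (ω : Fin n → Fin n → ℝ) : Prop :=
  ∀ i : Fin n, Ham σ ω ≤ Ham (flipSpin σ i) ω

/-- `σ ∈ {−1,+1}^n`. -/
def IsSpin {n : ℕ} (σ : Fin n → ℝ) : Prop := ∀ i, σ i = 1 ∨ σ i = -1

/-- `‖x‖₁ = ∑ |x i|`. -/
def l1 {n : ℕ} (ω : Fin n → ℝ) : ℝ := ∑ i, |ω i|

/-- The standard normal cumulative distribution function `Φ`. -/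
noncomputable def normCdf (t : ℝ) : ℝ :=
  ∫ x in Set.Iic t, (Real.sqrt (2 * Real.pi))⁻¹ * Real.exp (-x ^ 2 / 2)

/-- `φ(λ) = log (2 Φ(λ))`. -/
noncomputable def phiFn (l : ℝ) : ℝ := Real.log (2 * normCdf l)

/-- The Fenchel–Légendre transform `μ*(x) = sup_{λ ≥ 0} (λ x − λ²/2 − φ(λ))`. -/
noncomputable def muStar (x : ℝ) : ℝ :=
  ⨆ l : {l : ℝ // 0 ≤ l}, ((l : ℝ) * x - (l : ℝ) ^ 2 / 2 - phiFn l)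

/-- `R(x) = x²/4 − μ*(x)`. -/
noncomputable def Rfun (x : ℝ) : ℝ := x ^ 2 / 4 - muStar x


open Real Set

noncomputable def npdf (t : ℝ) : ℝ := (Real.sqrt (2 * Real.pi))⁻¹ * Real.exp (-t ^ 2 / 2)

lemma npdf_pos (t : ℝ) : 0 < npdf t := by
  unfold npdf; positivity

lemma continuous_npdf : Continuous npdf := by
  unfold npdf; fun_prop

lemma integrable_npdf : Integrable npdf := by
  have h : npdf = fun t => (Real.sqrt (2 * Real.pi))⁻¹ * Real.exp (-(1/2) * t ^ 2) := by
    funext t; unfold npdf; congr 1; ring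
  rw [h]
  exact (integrable_exp_neg_mul_sq (by norm_num : (0:ℝ) < 1/2)).const_mul _

lemma normCdf_eq (s : ℝ) : normCdf s = normCdf 0 + ∫ x in (0:ℝ)..s, npdf x := by
  have h := intervalIntegral.integral_Iic_sub_Iic (μ := volume) (f := npdf)
    (integrable_npdf.integrableOn) (integrable_npdf.integrableOn) (a := (0:ℝ)) (b := s)
  unfold normCdf npdf
  unfold npdf at h
  linarith

lemma hasDerivAt_normCdf (t : ℝ) : HasDerivAt normCdf (npdf t) t := by
  have h1 : HasDerivAt (fun s => ∫ x in (0:ℝ)..s, npdf x) (npdf t) t :=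
    intervalIntegral.integral_hasDerivAt_right (integrable_npdf.intervalIntegrable)
      (continuous_npdf.aestronglyMeasurable.stronglyMeasurableAtFilter)
      continuous_npdf.continuousAt
  have h2 : normCdf = fun s => normCdf 0 + ∫ x in (0:ℝ)..s, npdf x := funext normCdf_eq
  rw [h2]
  exact h1.const_add _

lemma normCdf_pos (t : ℝ) : 0 < normCdf t := by
  have h : normCdf t = ∫ x in Set.Iic t, npdf x := rfl
  rw [h, setIntegral_pos_iff_support_of_nonneg_ae]
  · have hs : Function.support npdf = Set.univ :=
      Set.eq_univ_of_forall fun x => (npdf_pos x).ne'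
    simp [hs, Real.volume_Iic]
  · exact Filter.Eventually.of_forall (fun x => (npdf_pos x).le)
  · exact integrable_npdf.integrableOn

lemma integral_npdf : ∫ x, npdf x = 1 := by
  have h : ∫ x, npdf x = (Real.sqrt (2 * Real.pi))⁻¹ * ∫ x, Real.exp (-(1/2) * x ^ 2) := by
    rw [← integral_const_mul]
    congr 1; funext t; unfold npdf; congr 1; ring
  rw [h, integral_gaussian]
  have : Real.sqrt (π / (1/2)) = Real.sqrt (2 * π) := by norm_num [mul_comm]
  rw [this, inv_mul_cancel₀]
  positivity

lemma normCdf_zero : normCdf 0 = 1/2 := by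
  have h1 : (∫ x in Set.Iic (0:ℝ), npdf x) + ∫ x in Set.Ioi (0:ℝ), npdf x = ∫ x, npdf x :=
    intervalIntegral.integral_Iic_add_Ioi integrable_npdf.integrableOn integrable_npdf.integrableOn
  have h2 : (∫ x in Set.Iic (0:ℝ), npdf x) = ∫ x in Set.Ioi (0:ℝ), npdf x := by
    have h3 := integral_comp_neg_Iic (0:ℝ) npdf
    have h4 : (fun x => npdf (-x)) = npdf := by
      funext x; unfold npdf; rw [neg_sq]
    rw [h4] at h3
    simpa using h3
  have h : normCdf 0 = ∫ x in Set.Iic (0:ℝ), npdf x := rfl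
  rw [integral_npdf] at h1
  rw [h]; linarith

lemma normCdf_lower (t : ℝ) (ht : 0 ≤ t) : 1/2 + t * npdf t ≤ normCdf t := by
  rw [normCdf_eq t, normCdf_zero]
  have h : t * npdf t ≤ ∫ x in (0:ℝ)..t, npdf x := by
    have hc : ∫ x in (0:ℝ)..t, npdf t = t * npdf t := by
      simp [intervalIntegral.integral_const, smul_eq_mul]
    rw [← hc]
    apply intervalIntegral.integral_mono_on ht intervalIntegrable_const
      (integrable_npdf.intervalIntegrable)
    intro x hx
    unfold npdf
    have hx2 : x ^ 2 ≤ t ^ 2 := by nlinarith [hx.1, hx.2]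
    have := Real.exp_le_exp.mpr (by linarith : -t ^ 2 / 2 ≤ -x ^ 2 / 2)
    have hp : (0:ℝ) ≤ (Real.sqrt (2 * Real.pi))⁻¹ := by positivity
    exact mul_le_mul_of_nonneg_left this hp
  linarith

noncomputable def mr (t : ℝ) : ℝ := npdf t / normCdf t

lemma mr_pos (t : ℝ) : 0 < mr t := div_pos (npdf_pos t) (normCdf_pos t)

lemma hasDerivAt_npdf (t : ℝ) : HasDerivAt npdf (-t * npdf t) t := by
  have h1 : HasDerivAt (fun s : ℝ => -s ^ 2 / 2) (-t) t := by
    have := ((hasDerivAt_pow 2 t).neg).div_const 2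
    simpa using this.congr_deriv (by ring)
  have h2 := (h1.exp).const_mul (Real.sqrt (2 * Real.pi))⁻¹
  exact h2.congr_deriv (by unfold npdf; ring)

lemma hasDerivAt_phiFn (t : ℝ) : HasDerivAt phiFn (mr t) t := by
  have h1 := ((hasDerivAt_normCdf t).const_mul 2).log
    (by have := normCdf_pos t; positivity)
  refine h1.congr_deriv ?_
  unfold mr
  exact mul_div_mul_left _ _ two_ne_zero

lemma hasDerivAt_mr (t : ℝ) : HasDerivAt mr (-t * mr t - mr t ^ 2) t := by
  have h := (hasDerivAt_npdf t).div (hasDerivAt_normCdf t) (normCdf_pos t).ne'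
  refine h.congr_deriv ?_
  unfold mr
  have hC := (normCdf_pos t).ne'
  field_simp

lemma mr_key (t : ℝ) (ht : 0 ≤ t) : t * mr t + mr t ^ 2 ≤ 19/20 := by
  have hC := normCdf_pos t
  have hP := npdf_pos t
  have hlow := normCdf_lower t ht
  have hsqrt : (5:ℝ)/2 ≤ Real.sqrt (2 * π) := by
    rw [show (5:ℝ)/2 = Real.sqrt ((5/2)^2) by rw [Real.sqrt_sq]; norm_num]
    apply Real.sqrt_le_sqrt
    nlinarith [Real.pi_gt_d6]
  have hinv : (Real.sqrt (2*π))⁻¹ ≤ 2/5 := by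
    rw [show (2:ℝ)/5 = (5/2 : ℝ)⁻¹ by norm_num]
    exact inv_anti₀ (by norm_num) hsqrt
  have hexp1 : Real.exp (-t^2/2) ≤ 1 := by
    rw [Real.exp_le_one_iff]; nlinarith
  have hP4 : npdf t ≤ 2/5 := by
    unfold npdf
    calc (Real.sqrt (2*π))⁻¹ * Real.exp (-t^2/2) ≤ (Real.sqrt (2*π))⁻¹ * 1 := by
          apply mul_le_mul_of_nonneg_left hexp1 (by positivity)
      _ ≤ 2/5 := by rw [mul_one]; exact hinv
  have htexp : t * Real.exp (-t^2/2) ≤ 1 := by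
    have h1 : t ≤ Real.exp (t^2/2) := by
      nlinarith [Real.add_one_le_exp (t^2/2), sq_nonneg (t-1)]
    have h2 : Real.exp (t^2/2) * Real.exp (-t^2/2) = 1 := by
      rw [← Real.exp_add, show t^2/2 + -t^2/2 = 0 by ring, Real.exp_zero]
    nlinarith [Real.exp_pos (-t^2/2)]
  have htP : t * npdf t ≤ 2/5 := by
    unfold npdf
    calc t * ((Real.sqrt (2*π))⁻¹ * Real.exp (-t^2/2))
        = (Real.sqrt (2*π))⁻¹ * (t * Real.exp (-t^2/2)) := by ring
      _ ≤ (2/5) * 1 := by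
          apply mul_le_mul hinv htexp (by positivity) (by norm_num)
      _ = 2/5 := by norm_num
  have hkey : t * npdf t * normCdf t + npdf t ^ 2 ≤ 19/20 * normCdf t ^ 2 := by
    nlinarith [mul_nonneg (sub_nonneg.mpr hlow) hC.le, sq_nonneg (normCdf t - 1/2 - t * npdf t),
      mul_nonneg ht hP.le, sq_nonneg (npdf t), sq_nonneg (t * npdf t)]
  have heq : t * mr t + mr t ^ 2 = (t * npdf t * normCdf t + npdf t ^ 2) / normCdf t ^ 2 := by
    unfold mr; field_simp
  rw [heq, div_le_iff₀ (by positivity)]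
  linarith [hkey]

lemma monoOnAux (g g' : ℝ → ℝ) (hg : ∀ t, HasDerivAt g (g' t) t) {s : Set ℝ}
    (hs : Convex ℝ s) (h0 : ∀ t ∈ s, 0 ≤ g' t) : MonotoneOn g s := by
  apply monotoneOn_of_deriv_nonneg hs
    (fun t _ => (hg t).continuousAt.continuousWithinAt)
    (fun t _ => ((hg t).differentiableAt).differentiableWithinAt)
  intro t ht
  rw [(hg t).deriv]
  exact h0 t (interior_subset ht)

lemma antiOnAux (g g' : ℝ → ℝ) (hg : ∀ t, HasDerivAt g (g' t) t) {s : Set ℝ}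
    (hs : Convex ℝ s) (h0 : ∀ t ∈ s, g' t ≤ 0) : AntitoneOn g s := by
  apply antitoneOn_of_deriv_nonpos hs
    (fun t _ => (hg t).continuousAt.continuousWithinAt)
    (fun t _ => ((hg t).differentiableAt).differentiableWithinAt)
  intro t ht
  rw [(hg t).deriv]
  exact h0 t (interior_subset ht)


theorem stmt15 (x : ℝ) (hx : Real.sqrt (2 / Real.pi) ≤ x)
    (l : ℝ) (hl0 : 0 ≤ l) (hl : l + deriv phiFn l = x)
    (lam : ℝ) (hlam : 0 ≤ lam) :
    (lam - l) ^ 2 / 40 ≤ muStar x - (lam * x - lam ^ 2 / 2 - phiFn lam) ∧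
    muStar x - (lam * x - lam ^ 2 / 2 - phiFn lam) ≤ (lam - l) ^ 2 / 2 := by
  have hl' : l + mr l = x := by rw [← (hasDerivAt_phiFn l).deriv]; exact hl
  set F : ℝ → ℝ := fun t => t * x - t ^ 2 / 2 - phiFn t with hF
  set d : ℝ → ℝ := fun t => x - t - mr t with hd
  have hdl : d l = 0 := by simp only [hd]; linarith
  have hFd : ∀ t, HasDerivAt F (d t) t := by
    intro t
    have h1 : HasDerivAt (fun s : ℝ => s * x) x t := by
      simpa using (hasDerivAt_id t).mul_const x
    have h2 : HasDerivAt (fun s : ℝ => s ^ 2 / 2) t t := by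
      simpa using (hasDerivAt_pow 2 t).div_const 2
    exact (h1.sub h2).sub (hasDerivAt_phiFn t)
  have hdd : ∀ t, HasDerivAt d (-1 + t * mr t + mr t ^ 2) t := by
    intro t
    have h1 : HasDerivAt (fun s : ℝ => x - s) (-1) t := by
      simpa using (hasDerivAt_id t).const_sub x
    exact (h1.sub (hasDerivAt_mr t)).congr_deriv (by ring)
  -- A and its antitonicity
  set A : ℝ → ℝ := fun t => d t + (t - l) / 20 with hA
  have hAd : ∀ t, HasDerivAt A (-1 + t * mr t + mr t ^ 2 + 1/20) t := fun t =>
    (hdd t).add ((((hasDerivAt_id t).sub_const l).div_const 20).congr_deriv (by norm_num))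
  have hAanti : AntitoneOn A (Set.Ici 0) := by
    apply antiOnAux A _ hAd (convex_Ici 0)
    intro t ht
    have := mr_key t ht
    linarith
  have hAl : A l = 0 := by simp only [hA, hdl]; ring
  -- B and its monotonicity
  set B : ℝ → ℝ := fun t => d t + (t - l) with hB
  have hBd : ∀ t, HasDerivAt B (-1 + t * mr t + mr t ^ 2 + 1) t := fun t =>
    (hdd t).add ((hasDerivAt_id t).sub_const l)
  have hBmono : MonotoneOn B (Set.Ici 0) := by
    apply monoOnAux B _ hBd (convex_Ici 0)
    intro t ht
    have h1 := mul_nonneg ht (mr_pos t).le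
    have h2 := sq_nonneg (mr t)
    linarith
  have hBl : B l = 0 := by simp only [hB, hdl]; ring
  -- G1
  have claim1 : ∀ t, 0 ≤ t → (t - l) ^ 2 / 40 ≤ F l - F t := by
    set G : ℝ → ℝ := fun t => F l - F t - (t - l) ^ 2 / 40 with hG
    have hGd : ∀ t, HasDerivAt G (-(A t)) t := by
      intro t
      have h2 : HasDerivAt (fun s : ℝ => (s - l) ^ 2 / 40) ((t - l) / 20) t := by
        have := (((hasDerivAt_id t).sub_const l).pow 2).div_const 40
        simpa using this.congr_deriv (by simp only [id_eq]; push_cast; ring)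
      exact (((hFd t).const_sub (F l)).sub h2).congr_deriv (by simp only [hA, hd]; ring)
    have hGl : G l = 0 := by simp only [hG]; ring
    intro t ht
    have key : 0 ≤ G t := by
      rcases le_total t l with htl | hlt
      · have hanti : AntitoneOn G (Set.Icc 0 l) := by
          apply antiOnAux G _ hGd (convex_Icc 0 l)
          intro s hs
          have : 0 ≤ A s := by
            rw [← hAl]
            exact hAanti (Set.mem_Ici.mpr hs.1) (Set.mem_Ici.mpr hl0) hs.2
          linarith
        have := hanti (Set.mem_Icc.mpr ⟨ht, htl⟩) (Set.mem_Icc.mpr ⟨hl0, le_refl l⟩) htl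
        linarith [hGl]
      · have hmono : MonotoneOn G (Set.Ici l) := by
          apply monoOnAux G _ hGd (convex_Ici l)
          intro s hs
          have : A s ≤ 0 := by
            rw [← hAl]
            exact hAanti (Set.mem_Ici.mpr hl0) (Set.mem_Ici.mpr (hl0.trans hs)) hs
          linarith
        have := hmono (Set.mem_Ici.mpr (le_refl l)) (Set.mem_Ici.mpr hlt) hlt
        linarith [hGl]
    simp only [hG] at key
    linarith
  -- G2
  have claim2 : ∀ t, 0 ≤ t → F l - F t ≤ (t - l) ^ 2 / 2 := by
    set G : ℝ → ℝ := fun t => (t - l) ^ 2 / 2 - (F l - F t) with hG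
    have hGd : ∀ t, HasDerivAt G (B t) t := by
      intro t
      have h2 : HasDerivAt (fun s : ℝ => (s - l) ^ 2 / 2) (t - l) t := by
        have := (((hasDerivAt_id t).sub_const l).pow 2).div_const 2
        simpa using this.congr_deriv (by simp only [id_eq]; push_cast; ring)
      exact (h2.sub ((hFd t).const_sub (F l))).congr_deriv (by simp only [hB, hd]; ring)
    have hGl : G l = 0 := by simp only [hG]; ring
    intro t ht
    have key : 0 ≤ G t := by
      rcases le_total t l with htl | hlt
      · have hanti : AntitoneOn G (Set.Icc 0 l) := by
          apply antiOnAux G _ hGd (convex_Icc 0 l)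
          intro s hs
          rw [← hBl]
          exact hBmono (Set.mem_Ici.mpr hs.1) (Set.mem_Ici.mpr hl0) hs.2
        have := hanti (Set.mem_Icc.mpr ⟨ht, htl⟩) (Set.mem_Icc.mpr ⟨hl0, le_refl l⟩) htl
        linarith [hGl]
      · have hmono : MonotoneOn G (Set.Ici l) := by
          apply monoOnAux G _ hGd (convex_Ici l)
          intro s hs
          rw [← hBl]
          exact hBmono (Set.mem_Ici.mpr hl0) (Set.mem_Ici.mpr (hl0.trans hs)) hs
        have := hmono (Set.mem_Ici.mpr (le_refl l)) (Set.mem_Ici.mpr hlt) hlt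
        linarith [hGl]
    simp only [hG] at key
    linarith
  -- muStar x = F l
  have hbdd : ∀ p : {l : ℝ // 0 ≤ l}, ((p : ℝ) * x - (p : ℝ) ^ 2 / 2 - phiFn p) ≤ F l := by
    intro p
    have h := claim1 p p.2
    have : ((p : ℝ) * x - (p : ℝ) ^ 2 / 2 - phiFn p) = F (p : ℝ) := rfl
    rw [this]
    have h0 : (0:ℝ) ≤ ((p : ℝ) - l) ^ 2 / 40 := by positivity
    exact sub_nonneg.mp (h0.trans h)
  have hmu : muStar x = F l := by
    apply le_antisymm
    · exact ciSup_le hbdd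
    · have : F l = ((⟨l, hl0⟩ : {l : ℝ // 0 ≤ l}) : ℝ) * x - (l : ℝ) ^ 2 / 2 - phiFn l := rfl
      rw [this]
      apply le_ciSup (f := fun p : {l : ℝ // 0 ≤ l} => (p : ℝ) * x - (p : ℝ) ^ 2 / 2 - phiFn p)
      exact ⟨F l, by rintro _ ⟨p, rfl⟩; exact hbdd p⟩
  have hFlam : lam * x - lam ^ 2 / 2 - phiFn lam = F lam := rfl
  rw [hmu, hFlam]
  exact ⟨claim1 lam hlam, claim2 lam hlam⟩
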